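/- arXiv:2602.19544 — 7 statements merged into one kernel-verified Lean document; each statement's English description precedes it below -/
import Mathlib

section
/- Suppose H : ℕ → ℚ is a sequence and p an odd prime such that for all n, H satisfies the Hecke eigenvalue relation H(p²n) + χ_p(n)H(n) + p·H(n/p²) = (p+1)H(n) (where H(n/p²) is interpreted as 0 if p² ∤ n, and χ_p(n) = (-n/p) is the Legendre symbol at -n). Define H̃(n) = H(n) − χ_p(n)H(n) − p·H(n/p²). Then for all n, H̃(p²n) = H̃(n); that is, the power series H̃ = Σ H̃(n)qⁿ satisfies H̃|U² = H̃ for the operator U : Σa(n)qⁿ ↦ Σa(pn)qⁿ. -/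
/-- The modified series coefficients
`H̃(n) = H(n) − χ_p(n)H(n) − p·H(n/p²)`, where `χ_p(n) = (-n/p)` is the Legendre
symbol and `H(n/p²)` is interpreted as `0` when `p² ∤ n`. -/
noncomputable def Htilde (p : ℕ) [Fact p.Prime] (H : ℕ → ℚ) (n : ℕ) : ℚ :=
  H n - (legendreSym p (-(n : ℤ)) : ℚ) * H n
    - p * (if p ^ 2 ∣ n then H (n / p ^ 2) else 0)

theorem legendreSym_neg_natCast_eq_zero_of_dvd (p : ℕ) [Fact p.Prime] {m : ℕ} (h : p ∣ m) :
    legendreSym p (-(m : ℤ)) = 0 := by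
  rw [legendreSym.eq_zero_iff]
  push_cast
  rw [(ZMod.natCast_eq_zero_iff m p).mpr h, neg_zero]

theorem Htilde_sq_mul (p : ℕ) [Fact p.Prime] (H : ℕ → ℚ) (n : ℕ) :
    Htilde p H (p ^ 2 * n) = H (p ^ 2 * n) - p * H n := by
  have hχ : legendreSym p (-((p ^ 2 * n : ℕ) : ℤ)) = 0 :=
    legendreSym_neg_natCast_eq_zero_of_dvd p (Dvd.intro (p * n) (by ring))
  have hdiv : p ^ 2 * n / p ^ 2 = n :=
    Nat.mul_div_cancel_left n (pow_pos (Fact.out : p.Prime).pos 2)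
  simp only [Htilde, hχ, dvd_mul_right, if_true, hdiv, Int.cast_zero, zero_mul, sub_zero]

theorem Htilde_U_sq_eq_self_general (p : ℕ) [Fact p.Prime] (H : ℕ → ℚ)
    (hH : ∀ n : ℕ,
      H (p ^ 2 * n) + (legendreSym p (-(n : ℤ)) : ℚ) * H n
          + p * (if p ^ 2 ∣ n then H (n / p ^ 2) else 0) = (p + 1) * H n) :
    ∀ n : ℕ, Htilde p H (p ^ 2 * n) = Htilde p H n := by
  intro n
  rw [Htilde_sq_mul, Htilde]
  linarith [hH n]

/-- If `H : ℕ → ℚ` satisfies the Hecke eigenvalue relation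
`H(p²n) + χ_p(n)H(n) + p·H(n/p²) = (p+1)H(n)` for an odd prime `p`, then
`H̃(p²n) = H̃(n)` for all `n`; i.e. `H̃|U² = H̃`. -/
theorem Htilde_U_sq_eq_self (p : ℕ) [Fact p.Prime] (hodd : p ≠ 2) (H : ℕ → ℚ)
    (hH : ∀ n : ℕ,
      H (p ^ 2 * n) + (legendreSym p (-(n : ℤ)) : ℚ) * H n
          + p * (if p ^ 2 ∣ n then H (n / p ^ 2) else 0) = (p + 1) * H n) :
    ∀ n : ℕ, Htilde p H (p ^ 2 * n) = Htilde p H n :=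
  Htilde_U_sq_eq_self_general p H hH
end

section
/- Under the same hypotheses (H satisfies H(p²n) + χ_p(n)H(n) + p·H(n/p²) = (p+1)H(n) for all n), define G̃(n) = H(n) − (1/p)χ_p(n)H(n) − H(n/p²). Then G̃(p²n) = p·G̃(n) for all n. -/
/-- The series coefficients `G̃(n) = H(n) − (1/p)χ_p(n)H(n) − H(n/p²)`, where
`χ_p(n) = (-n/p)` is the Legendre symbol and `H(n/p²)` is interpreted as `0`
when `p² ∤ n`. -/
noncomputable def Gtilde (p : ℕ) [Fact p.Prime] (H : ℕ → ℚ) (n : ℕ) : ℚ :=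
  H n - (1 / (p : ℚ)) * (legendreSym p (-(n : ℤ)) : ℚ) * H n
    - (if p ^ 2 ∣ n then H (n / p ^ 2) else 0)

theorem legendreSym_neg_pow_two_mul (p : ℕ) [Fact p.Prime] (n : ℕ) :
    legendreSym p (-((p ^ 2 * n : ℕ) : ℤ)) = 0 := by
  rw [legendreSym.eq_zero_iff]
  push_cast
  simp

theorem Gtilde_pow_two_mul (p : ℕ) [Fact p.Prime] (H : ℕ → ℚ) (n : ℕ) :
    Gtilde p H (p ^ 2 * n) = H (p ^ 2 * n) - H n := by
  have hp : 0 < p ^ 2 := pow_pos (Fact.out : p.Prime).pos 2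
  rw [Gtilde, legendreSym_neg_pow_two_mul, if_pos (dvd_mul_right _ _),
    Nat.mul_div_cancel_left n hp]
  simp

theorem Gtilde_U_sq_eq_p_smul_general (p : ℕ) [Fact p.Prime] (H : ℕ → ℚ)
    (hH : ∀ n : ℕ,
      H (p ^ 2 * n) + (legendreSym p (-(n : ℤ)) : ℚ) * H n
          + p * (if p ^ 2 ∣ n then H (n / p ^ 2) else 0) = (p + 1) * H n) :
    ∀ n : ℕ, Gtilde p H (p ^ 2 * n) = p * Gtilde p H n := by
  intro n
  have hp : (p : ℚ) ≠ 0 := Nat.cast_ne_zero.mpr (Fact.out : p.Prime).ne_zero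
  rw [Gtilde_pow_two_mul, Gtilde]
  field_simp
  linear_combination hH n

/-- If `H : ℕ → ℚ` satisfies the Hecke eigenvalue relation
`H(p²n) + χ_p(n)H(n) + p·H(n/p²) = (p+1)H(n)` for an odd prime `p`, then
`G̃(p²n) = p·G̃(n)` for all `n`. -/
theorem Gtilde_U_sq_eq_p_smul (p : ℕ) [Fact p.Prime] (hodd : p ≠ 2) (H : ℕ → ℚ)
    (hH : ∀ n : ℕ,
      H (p ^ 2 * n) + (legendreSym p (-(n : ℤ)) : ℚ) * H n
          + p * (if p ^ 2 ∣ n then H (n / p ^ 2) else 0) = (p + 1) * H n) :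
    ∀ n : ℕ, Gtilde p H (p ^ 2 * n) = p * Gtilde p H n :=
  Gtilde_U_sq_eq_p_smul_general p H hH
end

section
/- Under the same hypotheses, with H̃(n) = H(n) − χ_p(n)H(n) − p·H(n/p²), for every n the sequence H(p^{2m}n) converges p-adically as m → ∞ and (1−p)·lim_{m→∞} H(p^{2m}n) = H̃(n). -/
open Filter

/-- If `H : ℕ → ℚ` satisfies the Hecke relation
`H(p²n) + χ_p(n)H(n) + p·H(n/p²) = (p+1)H(n)` for an odd prime `p`, then for every
`n` the sequence `H(p^{2m}n)` converges `p`-adically as `m → ∞`, and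
`(1−p) · lim_{m→∞} H(p^{2m}n) = H̃(n)`. -/
theorem Htilde_eq_one_sub_p_mul_limit (p : ℕ) [Fact p.Prime] (hodd : p ≠ 2) (H : ℕ → ℚ)
    (hH : ∀ n : ℕ,
      H (p ^ 2 * n) + (legendreSym p (-(n : ℤ)) : ℚ) * H n
          + p * (if p ^ 2 ∣ n then H (n / p ^ 2) else 0) = (p + 1) * H n) :
    ∀ n : ℕ, ∃ L : ℚ_[p],
      Tendsto (fun m : ℕ => ((H (p ^ (2 * m) * n) : ℚ) : ℚ_[p])) atTop (nhds L) ∧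
        (1 - (p : ℚ_[p])) * L = ((Htilde p H n : ℚ) : ℚ_[p]) := by
  intro n
  have hppos : 0 < p := (Fact.out : p.Prime).pos
  -- the difference equation
  have key : ∀ m : ℕ, H (p ^ (2 * (m + 1)) * n)
      = H (p ^ (2 * m) * n) + (p : ℚ) ^ m * (H (p ^ 2 * n) - H n) := by
    intro m
    induction m with
    | zero =>
      have e1 : p ^ (2 * 1) * n = p ^ 2 * n := by ring
      have e0 : p ^ (2 * 0) * n = n := by simp
      rw [e1, e0]; ring
    | succ k ih =>
      have h := hH (p ^ (2 * (k + 1)) * n)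
      have hχ : legendreSym p (-((p ^ (2 * (k + 1)) * n : ℕ) : ℤ)) = 0 := by
        rw [legendreSym.eq_zero_iff]
        push_cast
        rw [ZMod.natCast_self]
        rw [zero_pow (by omega)]
        ring
      have hdvd : p ^ 2 ∣ p ^ (2 * (k + 1)) * n := ⟨p ^ (2 * k) * n, by ring⟩
      have hquot : p ^ (2 * (k + 1)) * n / p ^ 2 = p ^ (2 * k) * n := by
        rw [show p ^ (2 * (k + 1)) * n = p ^ 2 * (p ^ (2 * k) * n) by ring,
          Nat.mul_div_cancel_left _ (by positivity)]
      have e2 : p ^ 2 * (p ^ (2 * (k + 1)) * n) = p ^ (2 * (k + 1 + 1)) * n := by ring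
      rw [if_pos hdvd, hquot, hχ, e2] at h
      push_cast at h
      linear_combination h + (p : ℚ) * ih
  -- pass to ℚ_[p]
  set a : ℕ → ℚ_[p] := fun m => ((H (p ^ (2 * m) * n) : ℚ) : ℚ_[p]) with ha
  set c : ℚ_[p] := ((H (p ^ 2 * n) - H n : ℚ) : ℚ_[p]) with hc
  set u : ℚ_[p] := 1 - (p : ℚ_[p]) with huu
  have hu : u ≠ 0 := by
    intro h0
    have hp1 : (1 : ℚ_[p]) = (p : ℚ_[p]) := sub_eq_zero.mp h0
    have := Padic.norm_p_lt_one (p := p)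
    rw [← hp1] at this
    simp at this
  refine ⟨a 0 + c / u, ?_, ?_⟩
  · have closed : ∀ m : ℕ, a m = (a 0 + c / u) - c * (p : ℚ_[p]) ^ m / u := by
      intro m
      induction m with
      | zero => field_simp; ring
      | succ k ih =>
        have hk := key k
        have : a (k + 1) = a k + (p : ℚ_[p]) ^ k * c := by
          rw [ha, hc]
          push_cast [hk]
          ring
        rw [this, ih]
        field_simp
        ring
    have hpow : Tendsto (fun m : ℕ => (p : ℚ_[p]) ^ m) atTop (nhds 0) :=
      tendsto_pow_atTop_nhds_zero_of_norm_lt_one (Padic.norm_p_lt_one)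
    have : Tendsto (fun m : ℕ => (a 0 + c / u) - c * (p : ℚ_[p]) ^ m / u) atTop
        (nhds ((a 0 + c / u) - c * 0 / u)) := by
      exact (tendsto_const_nhds.sub (((hpow.const_mul c).div_const u)))
    simp only [mul_zero, zero_div, sub_zero] at this
    exact Tendsto.congr (fun m => (closed m).symm) this
  · have hq : Htilde p H n = H (p ^ 2 * n) - p * H n := by
      unfold Htilde
      linear_combination -hH n
    rw [hq]
    have ha0 : a 0 = ((H n : ℚ) : ℚ_[p]) := by
      rw [ha]; norm_num
    rw [ha0, hc]
    push_cast
    field_simp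
    ring
end

section
/- Let p ≥ 3 be a prime and let B : ℕ × ℕ → ℤ satisfy Jenkins' identity: for all n ≥ 1, B(D, p^{2n}d) = pⁿB(p^{2n}D, d) + Σ_{k=0}^{n-1} (D/p)^{n-k-1}(B(D/p², p^{2k}d) − p^{k+1}B(p^{2k}D, d/p²)) + Σ_{k=0}^{n-1} (D/p)^{n-k-1}((D/p) − (−d/p))·p^k·B(p^k D, d), where B(a,b) := 0 when the arguments are not valid and (·/p) is the Legendre symbol. Suppose p ∣ D but p² ∤ D. Then for all n ≥ 1, B(D, p^{2n}d) ≡ −(−d/p)·p^{n−1}·B(p^{2(n-1)}D, d) (mod pⁿ). In particular |B(D, p^{2n}d)|_p → 0 as n → ∞, i.e., the p-adic limit of B(D, p^{2n}d) is 0. -/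
/-!
Since `p ∣ D`, `(D/p) = 0` and Jenkins' identity keeps only its `k = n - 1` terms; for `n = 1`
this is the claim. For `n ≥ 2`, the identity at `(D, p²d, n - 1)` gives
`B(D, p^{2n}d) = p^{n-1}(B(p^{2(n-1)}D, p²d) - B(p^{2(n-2)}D, d))`, and the identity at
`(p^{2(n-1)}D, d, 1)` gives `B(p^{2(n-1)}D, p²d) ≡ B(p^{2(n-2)}D, d) - (-d/p)·B(p^{2(n-1)}D, d)`
mod `p`, so the `B(p^{2(n-2)}D, d)` terms cancel. The congruence makes `B(D, p^{2n}d)`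
divisible by `p^{n-1}`, hence `p`-adically small.
-/

open Filter Finset

/-- Jenkins' identity for the traces of singular moduli `B(D,d)`, with the convention
that `B(a,b) = 0` for invalid arguments (in particular `B(D/p², ·) = 0` when `p² ∤ D`
and `B(·, d/p²) = 0` when `p² ∤ d`), and `(·/p)` the Legendre symbol. -/
def JenkinsId (p : ℕ) [Fact p.Prime] (B : ℕ → ℕ → ℤ) : Prop :=
  ∀ D d n : ℕ, 1 ≤ n →
    B D (p ^ (2 * n) * d) =
      (p : ℤ) ^ n * B (p ^ (2 * n) * D) d
        + ∑ k ∈ range n, (legendreSym p (D : ℤ)) ^ (n - k - 1) *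
            ((if p ^ 2 ∣ D then B (D / p ^ 2) (p ^ (2 * k) * d) else 0)
              - (p : ℤ) ^ (k + 1) *
                (if p ^ 2 ∣ d then B (p ^ (2 * k) * D) (d / p ^ 2) else 0))
        + ∑ k ∈ range n, (legendreSym p (D : ℤ)) ^ (n - k - 1) *
            ((legendreSym p (D : ℤ) - legendreSym p (-(d : ℤ))) * (p : ℤ) ^ k *
              B (p ^ k * D) d)

theorem legendreSym_eq_zero_of_dvd {p : ℕ} [Fact p.Prime] {a : ℤ} (h : (p : ℤ) ∣ a) :
    legendreSym p a = 0 :=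
  (legendreSym.eq_zero_iff p a).2 ((ZMod.intCast_zmod_eq_zero_iff_dvd a p).2 h)

theorem Padic.tendsto_intCast_zero_of_pow_dvd {p : ℕ} [Fact p.Prime] {x : ℕ → ℤ}
    (hx : ∀ n, (p : ℤ) ^ n ∣ x (n + 1)) :
    Tendsto (fun n => (x n : ℚ_[p])) atTop (nhds 0) := by
  rw [← tendsto_add_atTop_iff_nat 1, tendsto_zero_iff_norm_tendsto_zero]
  have hp : (1 : ℝ) < p := by exact_mod_cast (Fact.out : p.Prime).one_lt
  refine squeeze_zero (fun _ => norm_nonneg _) (fun n => ?_)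
    (tendsto_pow_atTop_nhds_zero_of_lt_one (by positivity) (inv_lt_one_of_one_lt₀ hp))
  rw [inv_pow, ← zpow_natCast, ← zpow_neg]
  exact (Padic.norm_int_le_pow_iff_dvd _ _).2 (hx n)

namespace JenkinsId

variable {p : ℕ} [Fact p.Prime] {B : ℕ → ℕ → ℤ}

theorem eq_of_legendreSym_eq_zero (hJ : JenkinsId p B) {D : ℕ}
    (hD : legendreSym p (D : ℤ) = 0) (d n : ℕ) :
    B D (p ^ (2 * (n + 1)) * d) =
      (p : ℤ) ^ (n + 1) * B (p ^ (2 * (n + 1)) * D) d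
        + (if p ^ 2 ∣ D then B (D / p ^ 2) (p ^ (2 * n) * d) else 0)
        - (p : ℤ) ^ (n + 1) * (if p ^ 2 ∣ d then B (p ^ (2 * n) * D) (d / p ^ 2) else 0)
        - legendreSym p (-(d : ℤ)) * (p : ℤ) ^ n * B (p ^ n * D) d := by
  have h := hJ D d (n + 1) n.succ_pos
  have hvanish : ∀ k ∈ range n, (0 : ℤ) ^ (n + 1 - k - 1) = 0 := fun k hk =>
    zero_pow (by simp only [mem_range] at hk; omega)
  rw [hD, sum_range_succ, sum_range_succ, sum_eq_zero fun k hk => by rw [hvanish k hk, zero_mul],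
    sum_eq_zero fun k hk => by rw [hvanish k hk, zero_mul]] at h
  rw [h, show n + 1 - n - 1 = 0 by omega]
  ring

theorem modEq_pow_two_mul (hJ : JenkinsId p B) (E d : ℕ) :
    B (p ^ 2 * E) (p ^ 2 * d) ≡
      B E d - legendreSym p (-(d : ℤ)) * B (p ^ 2 * E) d [ZMOD p] := by
  have hE : legendreSym p ((p ^ 2 * E : ℕ) : ℤ) = 0 :=
    legendreSym_eq_zero_of_dvd (by push_cast; exact (dvd_pow_self _ two_ne_zero).mul_right _)
  have h := hJ.eq_of_legendreSym_eq_zero hE d 0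
  rw [if_pos (dvd_mul_right _ _),
    Nat.mul_div_cancel_left _ (pow_pos (Fact.out : p.Prime).pos _)] at h
  simp only [mul_zero, zero_add, mul_one, pow_zero, one_mul] at h
  refine (Int.modEq_iff_add_fac.2 ⟨B (p ^ 2 * (p ^ 2 * E)) d -
    (if p ^ 2 ∣ d then B (p ^ 2 * E) (d / p ^ 2) else 0), ?_⟩).symm
  rw [h]
  ring

section ExactlyDivides

variable {D : ℕ} (hJ : JenkinsId p B) (hD : legendreSym p (D : ℤ) = 0) (hD2 : ¬ p ^ 2 ∣ D)
include hJ hD hD2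

theorem eq_pow_mul_sub (d n : ℕ) :
    B D (p ^ (2 * (n + 2)) * d) =
      (p : ℤ) ^ (n + 1) * (B (p ^ (2 * (n + 1)) * D) (p ^ 2 * d) - B (p ^ (2 * n) * D) d) := by
  have h := hJ.eq_of_legendreSym_eq_zero hD (p ^ 2 * d) n
  have hd : legendreSym p (-((p ^ 2 * d : ℕ) : ℤ)) = 0 := legendreSym_eq_zero_of_dvd <| by
    push_cast; exact ((dvd_pow_self _ two_ne_zero).mul_right _).neg_right
  rw [if_neg hD2, if_pos (dvd_mul_right _ _),
    Nat.mul_div_cancel_left _ (pow_pos (Fact.out : p.Prime).pos _), hd] at h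
  rw [show p ^ (2 * (n + 2)) * d = p ^ (2 * (n + 1)) * (p ^ 2 * d) by ring, h]
  ring

theorem modEq_neg_legendreSym_mul (d : ℕ) {n : ℕ} (hn : 1 ≤ n) :
    B D (p ^ (2 * n) * d) ≡
      -(legendreSym p (-(d : ℤ))) * (p : ℤ) ^ (n - 1) * B (p ^ (2 * (n - 1)) * D) d
      [ZMOD (p : ℤ) ^ n] := by
  obtain _ | _ | m := n
  · omega
  · have h := hJ.eq_of_legendreSym_eq_zero hD d 0
    rw [if_neg hD2] at h
    simp only [Nat.sub_self, mul_zero, zero_add, pow_zero, pow_one, one_mul, add_zero,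
      mul_one] at h ⊢
    refine (Int.modEq_iff_add_fac.2 ⟨B (p ^ 2 * D) d -
      (if p ^ 2 ∣ d then B D (d / p ^ 2) else 0), ?_⟩).symm
    rw [h]
    ring
  · have h := hJ.modEq_pow_two_mul (p ^ (2 * m) * D) d
    rw [← mul_assoc, ← pow_add, show 2 + 2 * m = 2 * (m + 1) by ring] at h
    rw [show m + 2 - 1 = m + 1 from rfl, pow_succ]
    calc B D (p ^ (2 * (m + 2)) * d)
        = (p : ℤ) ^ (m + 1) * (B (p ^ (2 * (m + 1)) * D) (p ^ 2 * d) - B (p ^ (2 * m) * D) d) :=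
          hJ.eq_pow_mul_sub hD hD2 d m
      _ ≡ (p : ℤ) ^ (m + 1) * (B (p ^ (2 * m) * D) d
            - legendreSym p (-(d : ℤ)) * B (p ^ (2 * (m + 1)) * D) d - B (p ^ (2 * m) * D) d)
            [ZMOD (p : ℤ) ^ (m + 1) * p] := (h.sub_right _).mul_left'
      _ = _ := by ring

end ExactlyDivides

end JenkinsId

theorem jenkins_p_exactly_divides_D_general (p : ℕ) [Fact p.Prime]
    (B : ℕ → ℕ → ℤ) (hJ : JenkinsId p B) (D d : ℕ) (hpD : p ∣ D) (hp2D : ¬ p ^ 2 ∣ D) :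
    (∀ n : ℕ, 1 ≤ n →
        B D (p ^ (2 * n) * d) ≡
          -(legendreSym p (-(d : ℤ))) * (p : ℤ) ^ (n - 1) * B (p ^ (2 * (n - 1)) * D) d
          [ZMOD (p : ℤ) ^ n]) ∧
      Tendsto (fun n : ℕ => ((B D (p ^ (2 * n) * d) : ℤ) : ℚ_[p])) atTop (nhds 0) := by
  have hD : legendreSym p (D : ℤ) = 0 :=
    legendreSym_eq_zero_of_dvd (Int.natCast_dvd_natCast.2 hpD)
  have hcong := fun n => hJ.modEq_neg_legendreSym_mul hD hp2D d (n := n)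
  refine ⟨hcong, Padic.tendsto_intCast_zero_of_pow_dvd fun n => ?_⟩
  have h := (hcong (n + 1) n.succ_pos).of_dvd (pow_dvd_pow _ n.le_succ)
  rw [Nat.add_sub_cancel] at h
  exact h.dvd_iff.2 ((dvd_mul_left _ _).mul_right _)

/-- If `p ∣ D` but `p² ∤ D`, then `B(D, p^{2n}d) ≡ −(−d/p)·p^{n−1}·B(p^{2(n−1)}D, d)
(mod pⁿ)` for all `n ≥ 1`; in particular the `p`-adic limit of `B(D, p^{2n}d)` is `0`. -/
theorem jenkins_p_exactly_divides_D (p : ℕ) [Fact p.Prime] (hp3 : 3 ≤ p)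
    (B : ℕ → ℕ → ℤ) (hJ : JenkinsId p B) (D d : ℕ) (hpD : p ∣ D) (hp2D : ¬ p ^ 2 ∣ D) :
    (∀ n : ℕ, 1 ≤ n →
        B D (p ^ (2 * n) * d) ≡
          -(legendreSym p (-(d : ℤ))) * (p : ℤ) ^ (n - 1) * B (p ^ (2 * (n - 1)) * D) d
          [ZMOD (p : ℤ) ^ n]) ∧
      Tendsto (fun n : ℕ => ((B D (p ^ (2 * n) * d) : ℤ) : ℚ_[p])) atTop (nhds 0) :=
  jenkins_p_exactly_divides_D_general p B hJ D d hpD hp2D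
end

section
/- Let p ≥ 3 be prime, B : ℕ × ℕ → ℤ satisfy Jenkins' identity, and suppose (D/p) = −1. Then for all n ≥ 1: B(D, p^{2n}d) ≡ (−1)ⁿ Σ_{k=0}^{n-1} (−1)^k p^k (p·B(p^{2k}D, d/p²) + (1 + (−d/p))B(p^{2k}D, d)) (mod pⁿ). Consequently (−1)ⁿB(D, p^{2n}d) converges in ℤ_p, and if (−d/p) = −1 and p² ∤ d then B(D, p^{2n}d) = pⁿ B(p^{2n}D, d), so the limit is 0. -/
open Filter Finset

section PrimeFacts
variable {p : ℕ} [Fact p.Prime]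

lemma sq_mul_div_sq (X : ℕ) : p ^ 2 * X / p ^ 2 = X :=
  Nat.mul_div_cancel_left X (pow_pos (Fact.out : p.Prime).pos 2)

lemma legendreSym_natCast_pow_mul {i : ℕ} (hi : i ≠ 0) (X : ℕ) :
    legendreSym p ((p ^ i * X : ℕ) : ℤ) = 0 := by
  simp [legendreSym.eq_zero_iff, hi]

lemma legendreSym_neg_natCast_pow_mul {i : ℕ} (hi : i ≠ 0) (X : ℕ) :
    legendreSym p (-((p ^ i * X : ℕ) : ℤ)) = 0 := by
  simp [legendreSym.eq_zero_iff, hi]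

lemma not_sq_dvd_of_legendreSym_ne_zero {D : ℕ} (hD : legendreSym p (D : ℤ) ≠ 0) :
    ¬ p ^ 2 ∣ D := by
  rintro ⟨c, rfl⟩
  exact hD (legendreSym_natCast_pow_mul two_ne_zero c)

end PrimeFacts

namespace JenkinsId
variable {p : ℕ} [Fact p.Prime] {B : ℕ → ℕ → ℤ}

lemma eq (hJ : JenkinsId p B) (X Y n : ℕ) :
    B X (p ^ (2 * n) * Y) =
      (p : ℤ) ^ n * B (p ^ (2 * n) * X) Y
        + ∑ k ∈ range n, (legendreSym p (X : ℤ)) ^ (n - k - 1) *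
            ((if p ^ 2 ∣ X then B (X / p ^ 2) (p ^ (2 * k) * Y) else 0)
              - (p : ℤ) ^ (k + 1) *
                (if p ^ 2 ∣ Y then B (p ^ (2 * k) * X) (Y / p ^ 2) else 0))
        + ∑ k ∈ range n, (legendreSym p (X : ℤ)) ^ (n - k - 1) *
            ((legendreSym p (X : ℤ) - legendreSym p (-(Y : ℤ))) * (p : ℤ) ^ k *
              B (p ^ k * X) Y) := by
  rcases Nat.eq_zero_or_pos n with rfl | hn
  · simp
  · exact hJ X Y n hn

/-- Jenkins' identity in recursive form: subtracting `(X/p)` times the identity for `n` from the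
one for `n + 1` leaves only the last summands. -/
lemma step (hJ : JenkinsId p B) (X Y n : ℕ) :
    B X (p ^ (2 * (n + 1)) * Y) =
      legendreSym p X * B X (p ^ (2 * n) * Y)
        + (p : ℤ) ^ (n + 1) * B (p ^ (2 * (n + 1)) * X) Y
        - legendreSym p X * (p : ℤ) ^ n * B (p ^ (2 * n) * X) Y
        + (if p ^ 2 ∣ X then B (X / p ^ 2) (p ^ (2 * n) * Y) else 0)
        - (p : ℤ) ^ (n + 1) * (if p ^ 2 ∣ Y then B (p ^ (2 * n) * X) (Y / p ^ 2) else 0)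
        + (legendreSym p X - legendreSym p (-(Y : ℤ))) * (p : ℤ) ^ n * B (p ^ n * X) Y := by
  have hsum : ∀ f : ℕ → ℤ, ∑ k ∈ range (n + 1), legendreSym p X ^ (n + 1 - k - 1) * f k
      = legendreSym p X * ∑ k ∈ range n, legendreSym p X ^ (n - k - 1) * f k + f n := by
    intro f
    rw [sum_range_succ, mul_sum, show n + 1 - n - 1 = 0 by omega, pow_zero, one_mul]
    congr 1
    refine sum_congr rfl fun k hk => ?_
    rw [show n + 1 - k - 1 = n - k - 1 + 1 by have := mem_range.mp hk; omega, pow_succ]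
    ring
  rw [hJ.eq X Y (n + 1), hJ.eq X Y n, hsum, hsum]
  ring

lemma step_zero (hJ : JenkinsId p B) (X Y : ℕ) :
    B X (p ^ 2 * Y) =
      (p : ℤ) * B (p ^ 2 * X) Y
        + (if p ^ 2 ∣ X then B (X / p ^ 2) Y else 0)
        - (p : ℤ) * (if p ^ 2 ∣ Y then B X (Y / p ^ 2) else 0)
        + (legendreSym p X - legendreSym p (-(Y : ℤ))) * B X Y := by
  simpa using hJ.step X Y 0

/-- Comparing the identity for `(X, Y, 2)` with those for `(X, p²Y, 1)` and `(p²X, Y, 1)`. -/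
lemma legendreSym_sub_mul_sub_eq_zero (hJ : JenkinsId p B) (X Y : ℕ) :
    (legendreSym p (-(Y : ℤ)) - legendreSym p X) * (B (p ^ 2 * X) Y - B (p * X) Y) = 0 := by
  have h1 := hJ.step X Y 1
  have h2 := hJ.step_zero X (p ^ 2 * Y)
  have h3 := hJ.step_zero (p ^ 2 * X) Y
  rw [← mul_assoc, ← pow_add, if_pos (dvd_mul_right _ _), sq_mul_div_sq,
    legendreSym_neg_natCast_pow_mul two_ne_zero] at h2
  rw [← mul_assoc (p ^ 2), ← pow_add, if_pos (dvd_mul_right _ _), sq_mul_div_sq,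
    legendreSym_natCast_pow_mul two_ne_zero] at h3
  simp only [Nat.reduceAdd, Nat.reduceMul, pow_one] at h1 h2 h3
  have hp : (p : ℤ) ≠ 0 := by exact_mod_cast (Fact.out : p.Prime).ne_zero
  refine (mul_eq_zero.mp ?_).resolve_left hp
  linear_combination h2 - h1 + (p : ℤ) * h3

lemma B_pow_succ_mul_eq (hJ : JenkinsId p B) {D Y : ℕ}
    (hDY : legendreSym p D ≠ legendreSym p (-(Y : ℤ))) (hY : legendreSym p (-(Y : ℤ)) ≠ 0)
    (j : ℕ) : B (p ^ (j + 1) * D) Y = B (p * D) Y := by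
  induction j with
  | zero => rw [zero_add, pow_one]
  | succ j ih =>
    have hne : legendreSym p (-(Y : ℤ)) - legendreSym p ((p ^ j * D : ℕ) : ℤ) ≠ 0 := by
      rcases Nat.eq_zero_or_pos j with rfl | hj
      · simpa [sub_eq_zero] using hDY.symm
      · rwa [legendreSym_natCast_pow_mul hj.ne', sub_zero]
    have h := (mul_eq_zero.mp (hJ.legendreSym_sub_mul_sub_eq_zero (p ^ j * D) Y)).resolve_left hne
    rw [← ih, ← sub_eq_zero, ← h]
    ring_nf

/-- Comparing the identities for `(D, p²Y, k + 1)`, `(D, Y, k + 2)` and `(p^{2k+2}D, Y, 1)`. -/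
lemma pow_mul_sub_eq_pow_succ_mul_sub (hJ : JenkinsId p B) {D Y : ℕ}
    (hD : legendreSym p D ≠ 0) (hY : legendreSym p (-(Y : ℤ)) = 0) (k : ℕ) :
    (p : ℤ) ^ k * (B (p ^ (2 * k) * D) (p ^ 2 * Y) - B (p ^ k * D) (p ^ 2 * Y)) =
      (p : ℤ) ^ (k + 1) * (B (p ^ (2 * (k + 1)) * D) Y - B (p ^ (k + 1) * D) Y) := by
  have h1 := hJ.step D (p ^ 2 * Y) k
  have h2 := hJ.step D Y (k + 1)
  have h3 := hJ.step_zero (p ^ (2 * (k + 1)) * D) Y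
  have hdiv : p ^ (2 * (k + 1)) * D / p ^ 2 = p ^ (2 * k) * D := by
    rw [show p ^ (2 * (k + 1)) * D = p ^ 2 * (p ^ (2 * k) * D) by ring, sq_mul_div_sq]
  rw [show p ^ (2 * (k + 1)) * (p ^ 2 * Y) = p ^ (2 * (k + 1 + 1)) * Y by ring,
    show p ^ (2 * k) * (p ^ 2 * Y) = p ^ (2 * (k + 1)) * Y by ring,
    if_pos (dvd_mul_right _ _), sq_mul_div_sq, legendreSym_neg_natCast_pow_mul two_ne_zero] at h1
  rw [hY] at h2
  rw [show p ^ 2 * (p ^ (2 * (k + 1)) * D) = p ^ (2 * (k + 1 + 1)) * D by ring,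
    if_pos (Dvd.dvd.mul_right (pow_dvd_pow p (by omega)) D), hdiv,
    legendreSym_natCast_pow_mul (by omega), hY] at h3
  rw [← sub_eq_zero]
  refine (mul_eq_zero.mp ?_).resolve_left hD
  linear_combination h1 - h2 + (p : ℤ) ^ (k + 1) * h3

lemma B_pow_two_mul_eq_of_legendreSym_neg_eq_zero (hJ : JenkinsId p B) {D : ℕ}
    (hD : legendreSym p D ≠ 0) (k : ℕ) :
    ∀ Y : ℕ, legendreSym p (-(Y : ℤ)) = 0 → B (p ^ (2 * k) * D) Y = B (p ^ k * D) Y := by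
  induction k with
  | zero => simp
  | succ k ih =>
    intro Y hY
    have h := hJ.pow_mul_sub_eq_pow_succ_mul_sub hD hY k
    rw [ih _ (legendreSym_neg_natCast_pow_mul two_ne_zero Y), sub_self, mul_zero, eq_comm] at h
    exact sub_eq_zero.mp ((mul_eq_zero.mp h).resolve_left (pow_ne_zero _ (by exact_mod_cast
      (Fact.out : p.Prime).ne_zero)))

lemma one_add_legendreSym_mul_sub_eq_zero (hJ : JenkinsId p B) {D : ℕ}
    (hD : legendreSym p D = -1) (d k : ℕ) :
    (1 + legendreSym p (-(d : ℤ))) * (B (p ^ (2 * k) * D) d - B (p ^ k * D) d) = 0 := by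
  by_cases hd0 : legendreSym p (-(d : ℤ)) = 0
  · rw [hJ.B_pow_two_mul_eq_of_legendreSym_neg_eq_zero (by rw [hD]; norm_num) k d hd0, sub_self,
      mul_zero]
  rcases legendreSym.eq_one_or_neg_one p (mt (legendreSym.eq_zero_iff p _).mpr hd0) with hd | hd
  · have hconst := hJ.B_pow_succ_mul_eq (by rw [hD, hd]; norm_num) hd0
    rcases k with _ | k
    · simp
    · rw [show 2 * (k + 1) = 2 * k + 1 + 1 by ring, hconst, hconst, sub_self, mul_zero]
  · rw [hd, add_neg_cancel, zero_mul]

lemma eq_pow_mul_add_sum (hJ : JenkinsId p B) {D : ℕ} (hD : legendreSym p D = -1) (d n : ℕ) :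
    B D (p ^ (2 * n) * d) = (p : ℤ) ^ n * B (p ^ (2 * n) * D) d
      + (-1 : ℤ) ^ n * ∑ k ∈ range n, (-1 : ℤ) ^ k * (p : ℤ) ^ k *
          ((p : ℤ) * (if p ^ 2 ∣ d then B (p ^ (2 * k) * D) (d / p ^ 2) else 0)
            + (1 + legendreSym p (-(d : ℤ))) * B (p ^ (2 * k) * D) d) := by
  have hD2 : ¬ p ^ 2 ∣ D := not_sq_dvd_of_legendreSym_ne_zero (by rw [hD]; norm_num)
  rw [hJ.eq]
  simp only [hD, if_neg hD2]
  rw [mul_sum, add_assoc, ← sum_add_distrib]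
  congr 1
  refine sum_congr rfl fun k hk => ?_
  have hsign : (-1 : ℤ) ^ n * (-1) ^ k = -(-1) ^ (n - k - 1) := by
    rw [← pow_add, show n + k = n - k - 1 + 2 * k + 1 by have := mem_range.mp hk; omega, pow_succ,
      pow_add, pow_mul]
    norm_num
  linear_combination (-1 : ℤ) ^ (n - k - 1) * (p : ℤ) ^ k *
      hJ.one_add_legendreSym_mul_sub_eq_zero hD d k
    - ((p : ℤ) ^ (k + 1) * (if p ^ 2 ∣ d then B (p ^ (2 * k) * D) (d / p ^ 2) else 0)
      + (1 + legendreSym p (-(d : ℤ))) * (p : ℤ) ^ k * B (p ^ (2 * k) * D) d) * hsign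

end JenkinsId

section Padic
variable {p : ℕ} [Fact p.Prime]

lemma Padic.norm_intCast_le_of_pow_dvd {x : ℤ} {n : ℕ} (h : (p : ℤ) ^ n ∣ x) :
    ‖(x : ℚ_[p])‖ ≤ (p : ℝ)⁻¹ ^ n := by
  simpa [zpow_neg, inv_pow] using (Padic.norm_int_le_pow_iff_dvd x n).mpr h

lemma Padic.tendsto_zero_of_eventually_pow_dvd {a : ℕ → ℤ}
    (ha : ∀ᶠ n in atTop, (p : ℤ) ^ n ∣ a n) :
    Tendsto (fun n => (a n : ℚ_[p])) atTop (nhds 0) := by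
  have hp : (1 : ℝ) < p := by exact_mod_cast (Fact.out : p.Prime).one_lt
  exact squeeze_zero_norm' (ha.mono fun n => Padic.norm_intCast_le_of_pow_dvd)
    (tendsto_pow_atTop_nhds_zero_of_lt_one (by positivity) (inv_lt_one_of_one_lt₀ hp))

lemma Padic.exists_tendsto_of_modEq_sum {a t : ℕ → ℤ} (ht : ∀ k, (p : ℤ) ^ k ∣ t k)
    (ha : ∀ n, a n ≡ ∑ k ∈ range n, t k [ZMOD (p : ℤ) ^ n]) :
    ∃ L : ℚ_[p], Tendsto (fun n => (a n : ℚ_[p])) atTop (nhds L) := by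
  have hp : (1 : ℝ) < p := by exact_mod_cast (Fact.out : p.Prime).one_lt
  have hsum : Summable fun k => (t k : ℚ_[p]) :=
    Summable.of_norm_bounded (summable_geometric_of_lt_one (by positivity)
      (inv_lt_one_of_one_lt₀ hp)) fun k => Padic.norm_intCast_le_of_pow_dvd (ht k)
  have hdiff : Tendsto (fun n => ((a n - ∑ k ∈ range n, t k : ℤ) : ℚ_[p])) atTop (nhds 0) :=
    Padic.tendsto_zero_of_eventually_pow_dvd
      (Eventually.of_forall fun n => Int.ModEq.dvd (ha n).symm)
  refine ⟨∑' k, (t k : ℚ_[p]), ?_⟩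
  simpa using hsum.hasSum.tendsto_sum_nat.add hdiff

end Padic

theorem jenkins_legendre_D_eq_neg_one_general (p : ℕ) [Fact p.Prime]
    (B : ℕ → ℕ → ℤ) (hJ : JenkinsId p B) (D : ℕ) (hD : legendreSym p (D : ℤ) = -1) :
    (∀ d n : ℕ, 1 ≤ n →
        B D (p ^ (2 * n) * d) ≡
          (-1 : ℤ) ^ n * ∑ k ∈ range n, (-1 : ℤ) ^ k * (p : ℤ) ^ k *
            ((p : ℤ) * (if p ^ 2 ∣ d then B (p ^ (2 * k) * D) (d / p ^ 2) else 0)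
              + (1 + legendreSym p (-(d : ℤ))) * B (p ^ (2 * k) * D) d)
          [ZMOD (p : ℤ) ^ n]) ∧
      (∀ d : ℕ, ∃ L : ℚ_[p],
        Tendsto (fun n : ℕ => (((-1 : ℤ) ^ n * B D (p ^ (2 * n) * d) : ℤ) : ℚ_[p]))
          atTop (nhds L)) ∧
      (∀ d : ℕ, legendreSym p (-(d : ℤ)) = -1 → ¬ p ^ 2 ∣ d →
        (∀ n : ℕ, 1 ≤ n →
            B D (p ^ (2 * n) * d) = (p : ℤ) ^ n * B (p ^ (2 * n) * D) d) ∧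
          Tendsto (fun n : ℕ => (((-1 : ℤ) ^ n * B D (p ^ (2 * n) * d) : ℤ) : ℚ_[p]))
            atTop (nhds 0)) := by
  have hcong (d n : ℕ) : B D (p ^ (2 * n) * d) ≡
      (-1 : ℤ) ^ n * ∑ k ∈ range n, (-1 : ℤ) ^ k * (p : ℤ) ^ k *
        ((p : ℤ) * (if p ^ 2 ∣ d then B (p ^ (2 * k) * D) (d / p ^ 2) else 0)
          + (1 + legendreSym p (-(d : ℤ))) * B (p ^ (2 * k) * D) d) [ZMOD (p : ℤ) ^ n] :=
    Int.modEq_iff_dvd.mpr ⟨-B (p ^ (2 * n) * D) d, by rw [hJ.eq_pow_mul_add_sum hD]; ring⟩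
  refine ⟨fun d n _ => hcong d n, fun d => ?_, fun d hd hd2 => ?_⟩
  · refine Padic.exists_tendsto_of_modEq_sum (t := fun k => (-1 : ℤ) ^ k * (p : ℤ) ^ k *
        ((p : ℤ) * (if p ^ 2 ∣ d then B (p ^ (2 * k) * D) (d / p ^ 2) else 0)
          + (1 + legendreSym p (-(d : ℤ))) * B (p ^ (2 * k) * D) d))
      (fun k => Dvd.intro_left _ (mul_right_comm _ _ _)) fun n => ?_
    simpa [← mul_assoc, ← mul_pow] using (hcong d n).mul_left ((-1) ^ n)
  · have hexact (n : ℕ) : B D (p ^ (2 * n) * d) = (p : ℤ) ^ n * B (p ^ (2 * n) * D) d := by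
      simpa [hd, hd2] using hJ.eq_pow_mul_add_sum hD d n
    refine ⟨fun n _ => hexact n, Padic.tendsto_zero_of_eventually_pow_dvd
      (Eventually.of_forall fun n => ⟨(-1) ^ n * B (p ^ (2 * n) * D) d, ?_⟩)⟩
    rw [hexact]
    ring

/-- If `(D/p) = −1` then for `n ≥ 1`
`B(D, p^{2n}d) ≡ (−1)ⁿ Σ_{k<n} (−1)^k p^k (p·B(p^{2k}D, d/p²) + (1+(−d/p))B(p^{2k}D, d))
(mod pⁿ)`; consequently `(−1)ⁿB(D, p^{2n}d)` converges in `ℚ_p`, and if `(−d/p) = −1`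
and `p² ∤ d` then `B(D, p^{2n}d) = pⁿ B(p^{2n}D, d)`, so the limit is `0`. -/
theorem jenkins_legendre_D_eq_neg_one (p : ℕ) [Fact p.Prime] (hp3 : 3 ≤ p)
    (B : ℕ → ℕ → ℤ) (hJ : JenkinsId p B) (D : ℕ) (hD : legendreSym p (D : ℤ) = -1) :
    (∀ d n : ℕ, 1 ≤ n →
        B D (p ^ (2 * n) * d) ≡
          (-1 : ℤ) ^ n * ∑ k ∈ range n, (-1 : ℤ) ^ k * (p : ℤ) ^ k *
            ((p : ℤ) * (if p ^ 2 ∣ d then B (p ^ (2 * k) * D) (d / p ^ 2) else 0)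
              + (1 + legendreSym p (-(d : ℤ))) * B (p ^ (2 * k) * D) d)
          [ZMOD (p : ℤ) ^ n]) ∧
      (∀ d : ℕ, ∃ L : ℚ_[p],
        Tendsto (fun n : ℕ => (((-1 : ℤ) ^ n * B D (p ^ (2 * n) * d) : ℤ) : ℚ_[p]))
          atTop (nhds L)) ∧
      (∀ d : ℕ, legendreSym p (-(d : ℤ)) = -1 → ¬ p ^ 2 ∣ d →
        (∀ n : ℕ, 1 ≤ n →
            B D (p ^ (2 * n) * d) = (p : ℤ) ^ n * B (p ^ (2 * n) * D) d) ∧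
          Tendsto (fun n : ℕ => (((-1 : ℤ) ^ n * B D (p ^ (2 * n) * d) : ℤ) : ℚ_[p]))
            atTop (nhds 0)) :=
  jenkins_legendre_D_eq_neg_one_general p B hJ D hD
end

section
/- For an odd prime p, the operator T on formal power series over ℚ defined by f|T = f|U² + f ⊗ χ_p + p·f|V² (with U, V the standard p-operators and χ_p(n) = (−n/p)) satisfies: the generating function 𝓗 = −1/12 + Σ_{n>0} H(n)qⁿ of Hurwitz–Kronecker class numbers is an eigenvector with eigenvalue p + 1, i.e., coefficient-wise H(p²n) + χ_p(n)H(n) + p·H(n/p²) = (p+1)H(n) for all n ≥ 0, where H(0) = −1/12. -/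
open Finset

/-- The Kronecker symbol `(a/2)`: `0` if `a` is even, `1` if `a ≡ ±1 (mod 8)`,
`−1` if `a ≡ ±3 (mod 8)`. -/
def kronTwo (a : ℤ) : ℤ :=
  if a % 2 = 0 then 0 else if a % 8 = 1 ∨ a % 8 = 7 then 1 else -1

/-- The Kronecker symbol `(a/n)` for `n ≥ 1`, defined multiplicatively from the
Jacobi symbol on the odd part of `n` and `kronTwo` at `2`. -/
def kron (a : ℤ) (n : ℕ) : ℤ :=
  kronTwo a ^ (n.factorization 2) * jacobiSym a (n / 2 ^ (n.factorization 2))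

/-- `−r` is a fundamental discriminant (`r > 0`). -/
def IsNegFund (r : ℕ) : Prop :=
  0 < r ∧ ((r % 4 = 3 ∧ Squarefree r) ∨
    (r % 4 = 0 ∧ Squarefree (r / 4) ∧ (r / 4 % 4 = 1 ∨ r / 4 % 4 = 2)))

/-- `h(r)/w(r)` for a fundamental discriminant `−r < 0`, via the Dirichlet class
number formula `h = (w/(2r))·|Σ_{t<r} (−r/t)·t|`. -/
noncomputable def hOverW (r : ℕ) : ℚ :=
  |∑ t ∈ range r, (kron (-(r : ℤ)) t : ℚ) * t| / (2 * r)

open scoped Classical in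
/-- The Hurwitz–Kronecker class number `H(n)` (with `H(0) = −1/12`): for
`n = 𝔯f²` with `−𝔯` a fundamental discriminant,
`H(n) = (h(𝔯)/w(𝔯))·Σ_{m∣f} μ(m)(−𝔯/m)σ₁(f/m)`, and `H(n) = 0` for
`n ≡ 1,2 (mod 4)` (when no such decomposition exists). -/
noncomputable def hurwitzH (n : ℕ) : ℚ :=
  if n = 0 then -1 / 12
  else if h : ∃ rf : ℕ × ℕ, n = rf.1 * rf.2 ^ 2 ∧ IsNegFund rf.1 then
    hOverW (Classical.choose h).1 *
      ∑ m ∈ (Classical.choose h).2.divisors,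
        (ArithmeticFunction.moebius m : ℚ) * (kron (-((Classical.choose h).1 : ℤ)) m : ℚ) *
          (ArithmeticFunction.sigma 1 ((Classical.choose h).2 / m) : ℚ)
  else 0

/-!
Write `n = r f²` with `-r` a fundamental discriminant; the decomposition is unique, since `r`
determines the squarefree part of `n`. Then `H(n) = (h/w)(r) · λ(f)` with the multiplicative
function `λ = (μ · χ₋ᵣ) ∗ σ₁`. For odd `p` we have `p² ∤ r`, so `p² ∣ n ↔ p ∣ f`, and
`(-n/p)` is `(-r/p)` or `0` according as `p ∤ f` or `p ∣ f`. Since `p²n = r (pf)²`, the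
identity becomes `λ(pf) + [p ∣ f] p λ(f/p) + [p ∤ f] χ₋ᵣ(p) λ(f) = (p+1) λ(f)`, which by
multiplicativity reduces to `λ(pᵏ⁺¹) = σ₁(pᵏ⁺¹) - χ₋ᵣ(p) σ₁(pᵏ)` and the recurrence
`σ₁(pᵏ⁺²) + p σ₁(pᵏ) = (p+1) σ₁(pᵏ⁺¹)`. If `n` has no such decomposition, neither has `p²n`
nor `n/p²`, and all terms vanish.
-/

open ArithmeticFunction

lemma kron_one (a : ℤ) : kron a 1 = 1 := by
  simp [kron]

lemma kron_mul (a : ℤ) {m n : ℕ} (hm : m ≠ 0) (hn : n ≠ 0) :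
    kron a (m * n) = kron a m * kron a n := by
  have hcompl : m * n / 2 ^ (m.factorization 2 + n.factorization 2)
      = (m / 2 ^ m.factorization 2) * (n / 2 ^ n.factorization 2) := by
    simpa [Nat.factorization_mul hm hn, pow_add] using Nat.ordCompl_mul m n 2
  rw [kron, kron, kron, Nat.factorization_mul hm hn, Finsupp.add_apply, pow_add, hcompl,
    jacobiSym.mul_right' a (Nat.ordCompl_pos 2 hm).ne' (Nat.ordCompl_pos 2 hn).ne']
  ring

lemma kron_of_prime_ne_two (a : ℤ) {p : ℕ} [Fact p.Prime] (hodd : p ≠ 2) :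
    kron a p = legendreSym p a := by
  have h : p.factorization 2 = 0 :=
    Nat.factorization_eq_zero_of_not_dvd fun h ↦
      hodd ((Nat.prime_dvd_prime_iff_eq Nat.prime_two Fact.out).mp h).symm
  rw [kron, h, pow_zero, one_mul, pow_zero, Nat.div_one, jacobiSym.legendreSym.to_jacobiSym]

lemma legendreSym_mul_sq (p : ℕ) [Fact p.Prime] (a : ℤ) (f : ℕ) :
    legendreSym p (a * f ^ 2) = if p ∣ f then 0 else legendreSym p a := by
  split_ifs with hpf
  · rw [legendreSym.eq_zero_iff]
    push_cast
    rw [(ZMod.natCast_eq_zero_iff f p).mpr hpf]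
    ring
  · have hf : ((f : ℤ) : ZMod p) ≠ 0 := by
      rwa [Int.cast_natCast, Ne, ZMod.natCast_eq_zero_iff]
    rw [legendreSym.mul, legendreSym.sq_one' (p := p) hf, mul_one]

noncomputable def kronChar (a : ℤ) : ArithmeticFunction ℚ :=
  ⟨fun n ↦ if n = 0 then 0 else (kron a n : ℚ), by simp⟩

lemma kronChar_apply (a : ℤ) {n : ℕ} (hn : n ≠ 0) : kronChar a n = kron a n := by
  simp [kronChar, hn]

lemma isMultiplicative_kronChar (a : ℤ) : (kronChar a).IsMultiplicative := by
  refine ⟨by simp [kronChar, kron_one], fun {m n} _ ↦ ?_⟩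
  rcases eq_or_ne m 0 with rfl | hm
  · simp [kronChar]
  rcases eq_or_ne n 0 with rfl | hn
  · simp [kronChar]
  simp [kronChar, hm, hn, kron_mul a hm hn]

/-- The divisor sum `f ↦ Σ_{m ∣ f} μ(m) (a/m) σ₁(f/m)` in the definition of `hurwitzH`. -/
noncomputable def twistedSigma (a : ℤ) : ArithmeticFunction ℚ :=
  (moebius : ArithmeticFunction ℚ).pmul (kronChar a) * (sigma 1 : ArithmeticFunction ℚ)

lemma isMultiplicative_twistedSigma (a : ℤ) : (twistedSigma a).IsMultiplicative :=
  (isMultiplicative_moebius.intCast.pmul (isMultiplicative_kronChar a)).mul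
    isMultiplicative_sigma.natCast

lemma twistedSigma_apply (a : ℤ) (f : ℕ) :
    twistedSigma a f = ∑ m ∈ f.divisors, (moebius m : ℚ) * kron a m * sigma 1 (f / m) := by
  rw [twistedSigma, mul_apply, Nat.sum_divisorsAntidiagonal fun x y ↦
    (moebius : ArithmeticFunction ℚ).pmul (kronChar a) x * (sigma 1 : ArithmeticFunction ℚ) y]
  refine sum_congr rfl fun m hm ↦ ?_
  simp [pmul_apply, kronChar_apply a (Nat.pos_of_mem_divisors hm).ne']

lemma twistedSigma_prime_pow_succ (a : ℤ) {p : ℕ} (hp : p.Prime) (k : ℕ) :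
    twistedSigma a (p ^ (k + 1)) = sigma 1 (p ^ (k + 1)) - kron a p * sigma 1 (p ^ k) := by
  rw [twistedSigma_apply, Nat.sum_divisors_prime_pow hp, sum_range_succ', sum_range_succ']
  have hsq (i : ℕ) : moebius (p ^ (i + 2)) = 0 := by
    simp [moebius_apply_prime_pow hp]
  simp only [hsq, Int.cast_zero, zero_mul, sum_const_zero, zero_add]
  simp [moebius_apply_prime hp, kron_one, pow_succ', Nat.mul_div_cancel_left _ hp.pos]
  ring

lemma sigma_one_prime_pow_succ {p : ℕ} (hp : p.Prime) (k : ℕ) :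
    sigma 1 (p ^ (k + 1)) = p * sigma 1 (p ^ k) + 1 := by
  rw [sigma_one_apply_prime_pow hp, sigma_one_apply_prime_pow hp, sum_range_succ', mul_sum]
  simp [pow_succ, mul_comm]

lemma twistedSigma_prime_add_kron (a : ℤ) {p : ℕ} (hp : p.Prime) :
    twistedSigma a p + kron a p = p + 1 := by
  have h := twistedSigma_prime_pow_succ a hp 0
  rw [sigma_one_prime_pow_succ hp 0] at h
  simp only [zero_add, pow_one, pow_zero, isMultiplicative_sigma.map_one] at h
  push_cast at h
  linarith

lemma twistedSigma_prime_pow_add_two (a : ℤ) {p : ℕ} (hp : p.Prime) (k : ℕ) :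
    twistedSigma a (p ^ (k + 2)) + p * twistedSigma a (p ^ k)
      = (p + 1) * twistedSigma a (p ^ (k + 1)) := by
  have hs (j : ℕ) : (sigma 1 (p ^ (j + 1)) : ℚ) = p * sigma 1 (p ^ j) + 1 := by
    exact_mod_cast sigma_one_prime_pow_succ hp j
  have hsigma (j : ℕ) : (sigma 1 (p ^ (j + 2)) : ℚ) + p * sigma 1 (p ^ j)
      = (p + 1) * sigma 1 (p ^ (j + 1)) := by
    linear_combination hs (j + 1) - hs j
  rcases k with _ | k
  · have hs0 : (sigma 1 (p ^ 0) : ℚ) = 1 := by simp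
    rw [pow_zero, (isMultiplicative_twistedSigma a).map_one, twistedSigma_prime_pow_succ a hp,
      twistedSigma_prime_pow_succ a hp]
    linear_combination hsigma 0 - kron a p * hs 0 + (kron a p - p) * hs0
  · simp only [twistedSigma_prime_pow_succ a hp]
    linear_combination hsigma (k + 1) - kron a p * hsigma k

lemma twistedSigma_hecke (a : ℤ) {p f : ℕ} (hp : p.Prime) (hf : f ≠ 0) :
    twistedSigma a (p * f)
        + (if p ∣ f then p * twistedSigma a (f / p) else kron a p * twistedSigma a f)
      = (p + 1) * twistedSigma a f := by
  obtain ⟨e, u, hpu, rfl⟩ := Nat.exists_eq_pow_mul_and_not_dvd hf p hp.ne_one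
  have hmul (j : ℕ) : twistedSigma a (p ^ j * u) = twistedSigma a (p ^ j) * twistedSigma a u :=
    (isMultiplicative_twistedSigma a).map_mul_of_coprime
      ((hp.coprime_iff_not_dvd.mpr hpu).pow_left j)
  rcases e with _ | k
  · rw [pow_zero, one_mul, if_neg hpu, ← pow_one p, hmul, pow_one]
    linear_combination twistedSigma a u * twistedSigma_prime_add_kron a hp
  · rw [if_pos (dvd_mul_of_dvd_left (dvd_pow_self p k.succ_ne_zero) u),
      show p * (p ^ (k + 1) * u) = p ^ (k + 2) * u by ring,
      Nat.div_eq_of_eq_mul_left hp.pos (show p ^ (k + 1) * u = p ^ k * u * p by ring),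
      hmul, hmul, hmul]
    linear_combination twistedSigma a u * twistedSigma_prime_pow_add_two a hp k

lemma Squarefree.eq_of_mul_sq_eq {s₁ g₁ s₂ g₂ : ℕ} (hs₁ : Squarefree s₁) (hs₂ : Squarefree s₂)
    (hg₁ : g₁ ≠ 0) (hg₂ : g₂ ≠ 0) (h : s₁ * g₁ ^ 2 = s₂ * g₂ ^ 2) : s₁ = s₂ := by
  refine Nat.eq_of_factorization_eq hs₁.ne_zero hs₂.ne_zero fun q ↦ ?_
  have hq : s₁.factorization q + 2 * g₁.factorization q
      = s₂.factorization q + 2 * g₂.factorization q := by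
    simpa [Nat.factorization_mul hs₁.ne_zero (pow_ne_zero 2 hg₁),
      Nat.factorization_mul hs₂.ne_zero (pow_ne_zero 2 hg₂)] using
      congrArg (fun m ↦ m.factorization q) h
  have h₁ := (Nat.squarefree_iff_factorization_le_one hs₁.ne_zero).mp hs₁ q
  have h₂ := (Nat.squarefree_iff_factorization_le_one hs₂.ne_zero).mp hs₂ q
  omega

lemma IsNegFund.exists_squarefree {r : ℕ} (hr : IsNegFund r) :
    ∃ s c, Squarefree s ∧ r = c ^ 2 * s ∧
      (c = 1 ∧ s % 4 = 3 ∨ c = 2 ∧ (s % 4 = 1 ∨ s % 4 = 2)) := by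
  rcases hr.2 with ⟨h3, hsq⟩ | ⟨h0, hsq, h12⟩
  · exact ⟨r, 1, hsq, by ring, Or.inl ⟨rfl, h3⟩⟩
  · exact ⟨r / 4, 2, hsq, by norm_num; omega, Or.inr ⟨rfl, h12⟩⟩

lemma IsNegFund.eq_of_mul_sq_eq {r₁ f₁ r₂ f₂ : ℕ} (hr₁ : IsNegFund r₁) (hr₂ : IsNegFund r₂)
    (hf₁ : f₁ ≠ 0) (h : r₁ * f₁ ^ 2 = r₂ * f₂ ^ 2) : r₁ = r₂ ∧ f₁ = f₂ := by
  have hf₂ : f₂ ≠ 0 := by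
    rintro rfl
    simp [hr₁.1.ne', hf₁] at h
  have hr : r₁ = r₂ := by
    obtain ⟨s₁, c₁, hs₁, rfl, hc₁⟩ := hr₁.exists_squarefree
    obtain ⟨s₂, c₂, hs₂, rfl, hc₂⟩ := hr₂.exists_squarefree
    have hs : s₁ = s₂ :=
      hs₁.eq_of_mul_sq_eq hs₂ (g₁ := c₁ * f₁) (g₂ := c₂ * f₂)
        (mul_ne_zero (by omega) hf₁) (mul_ne_zero (by omega) hf₂)
        (by rw [mul_pow, mul_pow, ← mul_assoc, ← mul_assoc, mul_comm s₁, mul_comm s₂, h])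
    have hc : c₁ = c₂ := by omega
    rw [hs, hc]
  subst hr
  exact ⟨rfl, Nat.pow_left_injective two_ne_zero (Nat.eq_of_mul_eq_mul_left hr₁.1 h)⟩

lemma IsNegFund.not_sq_dvd {r p : ℕ} (hr : IsNegFund r) (hp : p.Prime) (hodd : p ≠ 2) :
    ¬ p ^ 2 ∣ r := by
  obtain ⟨s, c, hs, rfl, hc⟩ := hr.exists_squarefree
  have hpc : ¬ p ∣ c := by
    rcases hc with ⟨rfl, -⟩ | ⟨rfl, -⟩
    · exact hp.not_dvd_one
    · exact fun h ↦ hodd ((Nat.prime_dvd_prime_iff_eq hp Nat.prime_two).mp h)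
  intro hdvd
  have hps : p * p ∣ s := by
    simpa [sq] using ((hp.coprime_iff_not_dvd.mpr hpc).pow 2 2).dvd_of_dvd_mul_left hdvd
  exact hp.one_lt.ne' (Nat.isUnit_iff.mp (hs p hps))

lemma IsNegFund.sq_dvd_mul_sq_iff {r f p : ℕ} (hr : IsNegFund r) (hp : p.Prime) (hodd : p ≠ 2) :
    p ^ 2 ∣ r * f ^ 2 ↔ p ∣ f := by
  refine ⟨fun h ↦ ?_, fun h ↦ Dvd.dvd.mul_left (pow_dvd_pow_of_dvd h 2) r⟩
  by_contra hpf
  exact hr.not_sq_dvd hp hodd (((hp.coprime_iff_not_dvd.mpr hpf).pow 2 2).dvd_of_dvd_mul_right h)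

lemma exists_isNegFund_prime_sq_mul_iff {p n : ℕ} (hp : p.Prime) (hodd : p ≠ 2) :
    (∃ r f, IsNegFund r ∧ p ^ 2 * n = r * f ^ 2) ↔ ∃ r f, IsNegFund r ∧ n = r * f ^ 2 := by
  constructor
  · rintro ⟨r, f, hr, h⟩
    obtain ⟨g, rfl⟩ := (hr.sq_dvd_mul_sq_iff hp hodd).mp (h ▸ dvd_mul_right _ _)
    exact ⟨r, g, hr, Nat.eq_of_mul_eq_mul_left (pow_pos hp.pos 2) (h.trans (by ring))⟩
  · rintro ⟨r, f, hr, rfl⟩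
    exact ⟨r, p * f, hr, by ring⟩

lemma hurwitzH_eq_zero {n : ℕ} (hn : n ≠ 0) (h : ¬ ∃ r f, IsNegFund r ∧ n = r * f ^ 2) :
    hurwitzH n = 0 := by
  rw [hurwitzH, if_neg hn, dif_neg]
  rintro ⟨⟨r, f⟩, hnrf, hr⟩
  exact h ⟨r, f, hr, hnrf⟩

lemma hurwitzH_mul_sq {r f : ℕ} (hr : IsNegFund r) (hf : f ≠ 0) :
    hurwitzH (r * f ^ 2) = hOverW r * twistedSigma (-r) f := by
  have hex : ∃ rf : ℕ × ℕ, r * f ^ 2 = rf.1 * rf.2 ^ 2 ∧ IsNegFund rf.1 := ⟨(r, f), rfl, hr⟩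
  obtain ⟨hrf, hr'⟩ := Classical.choose_spec hex
  obtain ⟨hr_eq, hf_eq⟩ := hr.eq_of_mul_sq_eq hr' hf hrf
  rw [hurwitzH, if_neg (mul_ne_zero hr.1.ne' (pow_ne_zero 2 hf)), dif_pos hex, ← hr_eq, ← hf_eq,
    twistedSigma_apply]

section Hecke

variable {p : ℕ} [Fact p.Prime]

lemma hurwitzH_hecke_mul_sq (hodd : p ≠ 2) {r f : ℕ} (hr : IsNegFund r) (hf : f ≠ 0) :
    hurwitzH (p ^ 2 * (r * f ^ 2)) + (legendreSym p (-((r * f ^ 2 : ℕ) : ℤ)) : ℚ)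
        * hurwitzH (r * f ^ 2)
        + p * (if p ^ 2 ∣ r * f ^ 2 then hurwitzH (r * f ^ 2 / p ^ 2) else 0)
      = (p + 1) * hurwitzH (r * f ^ 2) := by
  have hp : p.Prime := Fact.out
  have hleg : legendreSym p (-((r * f ^ 2 : ℕ) : ℤ)) = if p ∣ f then 0 else kron (-r) p := by
    rw [kron_of_prime_ne_two _ hodd, ← legendreSym_mul_sq]
    push_cast
    ring_nf
  have hT := twistedSigma_hecke (-r) hp hf
  simp only [hr.sq_dvd_mul_sq_iff hp hodd]
  rw [hleg, show p ^ 2 * (r * f ^ 2) = r * (p * f) ^ 2 by ring,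
    hurwitzH_mul_sq hr hf, hurwitzH_mul_sq hr (mul_ne_zero hp.ne_zero hf)]
  split_ifs at hT ⊢ with hpf
  · have hdiv : r * f ^ 2 / p ^ 2 = r * (f / p) ^ 2 := by
      rw [Nat.div_pow hpf, Nat.mul_div_assoc _ (pow_dvd_pow_of_dvd hpf 2)]
    rw [hdiv, hurwitzH_mul_sq hr (Nat.div_pos (Nat.le_of_dvd (Nat.pos_of_ne_zero hf) hpf)
      hp.pos).ne']
    linear_combination hOverW r * hT
  · linear_combination hOverW r * hT

lemma hurwitzH_hecke_of_not_exists (hodd : p ≠ 2) {n : ℕ} (hn : n ≠ 0)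
    (hrep : ¬ ∃ r f, IsNegFund r ∧ n = r * f ^ 2) :
    hurwitzH (p ^ 2 * n) + (legendreSym p (-(n : ℤ)) : ℚ) * hurwitzH n
        + p * (if p ^ 2 ∣ n then hurwitzH (n / p ^ 2) else 0)
      = (p + 1) * hurwitzH n := by
  have hp : p.Prime := Fact.out
  have hpn := (exists_isNegFund_prime_sq_mul_iff hp hodd).not.mpr hrep
  rw [hurwitzH_eq_zero hn hrep, hurwitzH_eq_zero (mul_ne_zero (pow_ne_zero 2 hp.ne_zero) hn) hpn]
  split_ifs with hdvd
  · obtain ⟨m, rfl⟩ := hdvd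
    rw [Nat.mul_div_cancel_left _ (pow_pos hp.pos 2), hurwitzH_eq_zero (right_ne_zero_of_mul hn)
      ((exists_isNegFund_prime_sq_mul_iff hp hodd).not.mp hrep)]
    ring
  · ring

end Hecke

/-- The generating function `𝓗 = −1/12 + Σ H(n)qⁿ` of Hurwitz–Kronecker class
numbers is an eigenvector of the weight `3/2` Hecke operator
`T = U² + ⊗χ_p + p·V²` with eigenvalue `p + 1`; coefficient-wise,
`H(p²n) + χ_p(n)H(n) + p·H(n/p²) = (p+1)H(n)` for all `n ≥ 0`. -/
theorem hurwitzH_hecke_eigen (p : ℕ) [Fact p.Prime] (hodd : p ≠ 2) :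
    ∀ n : ℕ,
      hurwitzH (p ^ 2 * n) + (legendreSym p (-(n : ℤ)) : ℚ) * hurwitzH n
          + p * (if p ^ 2 ∣ n then hurwitzH (n / p ^ 2) else 0)
        = (p + 1) * hurwitzH n := by
  intro n
  rcases eq_or_ne n 0 with rfl | hn
  · simp only [mul_zero, Nat.cast_zero, neg_zero, legendreSym.at_zero, dvd_zero, if_true,
      Nat.zero_div]
    ring
  by_cases hrep : ∃ r f, IsNegFund r ∧ n = r * f ^ 2
  · obtain ⟨r, f, hr, rfl⟩ := hrep
    exact hurwitzH_hecke_mul_sq hodd hr (by rintro rfl; simp at hn)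
  · exact hurwitzH_hecke_of_not_exists hodd hn hrep
end

section
/- Let p ≥ 3 be prime and B satisfy Jenkins' identity. Fix D with (D/p) = −1 and d with p² ∤ d. Then for all n ≥ 1, (−1)ⁿB(D, p^{2n}d) ≡ (−1)^{n+1}B(D, p^{2(n+1)}d) (mod pⁿ); i.e., the sequence cₙ = (−1)ⁿB(D, p^{2n}d) is a p-adic Cauchy sequence with |c_{n+1} − c_n|_p ≤ p^{−n}. -/
open Finset

/-! Adding Jenkins' identities at `n` and `n + 1`, the alternating sums cancel up to their
top term, so `B(D, p^{2(n+1)}d) + B(D, p^{2n}d)` is `pⁿ` times an integer; the sum involving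
`B(·, d/p²)` is absent because `p² ∤ d`. -/

theorem sum_range_succ_neg_one_pow_mul {R : Type*} [CommRing R] (a : ℕ → R) (n : ℕ) :
    ∑ k ∈ range (n + 1), (-1 : R) ^ (n + 1 - k - 1) * a k
      = a n - ∑ k ∈ range n, (-1 : R) ^ (n - k - 1) * a k := by
  have hsign : ∀ k ∈ range n, (-1 : R) ^ (n + 1 - k - 1) * a k
      = -((-1 : R) ^ (n - k - 1) * a k) := by
    intro k hk
    rw [show n + 1 - k - 1 = n - k - 1 + 1 by have := mem_range.mp hk; omega, pow_succ]
    ring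
  rw [sum_range_succ, sum_congr rfl hsign, sum_neg_distrib,
    show n + 1 - n - 1 = 0 by omega, pow_zero, one_mul]
  ring

theorem add_eq_pow_mul_of_alternating_recurrence {R : Type*} [CommRing R] (q c : R)
    (x y : ℕ → R) (n : ℕ)
    (hn : x n = q ^ n * y n - ∑ k ∈ range n, (-1 : R) ^ (n - k - 1) * c * q ^ k * y k)
    (hsucc : x (n + 1) = q ^ (n + 1) * y (n + 1)
      - ∑ k ∈ range (n + 1), (-1 : R) ^ (n + 1 - k - 1) * c * q ^ k * y k) :
    x (n + 1) + x n = q ^ n * (q * y (n + 1) + (1 - c) * y n) := by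
  rw [hsucc, hn]
  simp only [mul_assoc]
  rw [sum_range_succ_neg_one_pow_mul]
  ring

theorem Padic.norm_intCast_sub_le_of_dvd {p : ℕ} [Fact p.Prime] {a b : ℤ} {n : ℕ}
    (h : (p : ℤ) ^ n ∣ a - b) : ‖(a : ℚ_[p]) - b‖ ≤ (p : ℝ) ^ (-n : ℤ) := by
  rw [← Int.cast_sub]
  exact (Padic.norm_int_le_pow_iff_dvd _ _).mpr h

theorem jenkins_alternating_cauchy_general (p : ℕ) [Fact p.Prime]
    (B : ℕ → ℕ → ℤ) (D d : ℕ) (hd2 : ¬ p ^ 2 ∣ d)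
    (hJ : ∀ n : ℕ, 1 ≤ n →
      B D (p ^ (2 * n) * d) =
        (p : ℤ) ^ n * B (p ^ (2 * n) * D) d
          - ∑ k ∈ range n, (-1 : ℤ) ^ (n - k - 1) * (p : ℤ) ^ (k + 1) *
              (if p ^ 2 ∣ d then B (p ^ (2 * k) * D) (d / p ^ 2) else 0)
          - ∑ k ∈ range n, (-1 : ℤ) ^ (n - k - 1) * (1 + legendreSym p (-(d : ℤ))) *
              (p : ℤ) ^ k * B (p ^ (2 * k) * D) d) :
    ∀ n : ℕ, 1 ≤ n →
      ((-1 : ℤ) ^ n * B D (p ^ (2 * n) * d) ≡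
          (-1 : ℤ) ^ (n + 1) * B D (p ^ (2 * (n + 1)) * d) [ZMOD (p : ℤ) ^ n]) ∧
        ‖(((-1 : ℤ) ^ (n + 1) * B D (p ^ (2 * (n + 1)) * d) : ℤ) : ℚ_[p])
            - (((-1 : ℤ) ^ n * B D (p ^ (2 * n) * d) : ℤ) : ℚ_[p])‖
          ≤ (p : ℝ) ^ (-(n : ℤ)) := by
  intro n hn
  have hrec : ∀ m, 1 ≤ m → B D (p ^ (2 * m) * d) = (p : ℤ) ^ m * B (p ^ (2 * m) * D) d
      - ∑ k ∈ range m, (-1 : ℤ) ^ (m - k - 1) * (1 + legendreSym p (-(d : ℤ))) *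
          (p : ℤ) ^ k * B (p ^ (2 * k) * D) d := fun m hm => by
    simpa only [if_neg hd2, mul_zero, sum_const_zero, sub_zero] using hJ m hm
  have hsum := add_eq_pow_mul_of_alternating_recurrence _ _ (fun m => B D (p ^ (2 * m) * d))
    (fun m => B (p ^ (2 * m) * D) d) n (hrec n hn) (hrec (n + 1) (by omega))
  have hdvd : (p : ℤ) ^ n ∣ (-1) ^ (n + 1) * B D (p ^ (2 * (n + 1)) * d)
      - (-1) ^ n * B D (p ^ (2 * n) * d) := by
    rw [pow_succ, show ∀ a b : ℤ, (-1) ^ n * -1 * a - (-1) ^ n * b = -(-1) ^ n * (a + b) by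
      intros; ring]
    exact Dvd.dvd.mul_left ⟨_, hsum⟩ _
  exact ⟨Int.modEq_iff_dvd.mpr hdvd, Padic.norm_intCast_sub_le_of_dvd hdvd⟩

/-- Let `p ≥ 3` be prime and let `B` satisfy Jenkins' identity, specialized to
`(D/p) = −1`. Fix `D` with `(D/p) = −1` and `d` with `p² ∤ d`. Then for all
`n ≥ 1`, `(−1)ⁿB(D, p^{2n}d) ≡ (−1)^{n+1}B(D, p^{2(n+1)}d) (mod pⁿ)`; i.e. the
sequence `cₙ = (−1)ⁿB(D, p^{2n}d)` is a `p`-adic Cauchy sequence with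
`|c_{n+1} − c_n|_p ≤ p^{−n}`. -/
theorem jenkins_alternating_cauchy (p : ℕ) [Fact p.Prime] (hp3 : 3 ≤ p)
    (B : ℕ → ℕ → ℤ) (D d : ℕ) (hD : legendreSym p (D : ℤ) = -1) (hd2 : ¬ p ^ 2 ∣ d)
    (hJ : ∀ n : ℕ, 1 ≤ n →
      B D (p ^ (2 * n) * d) =
        (p : ℤ) ^ n * B (p ^ (2 * n) * D) d
          - ∑ k ∈ range n, (-1 : ℤ) ^ (n - k - 1) * (p : ℤ) ^ (k + 1) *
              (if p ^ 2 ∣ d then B (p ^ (2 * k) * D) (d / p ^ 2) else 0)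
          - ∑ k ∈ range n, (-1 : ℤ) ^ (n - k - 1) * (1 + legendreSym p (-(d : ℤ))) *
              (p : ℤ) ^ k * B (p ^ (2 * k) * D) d) :
    ∀ n : ℕ, 1 ≤ n →
      ((-1 : ℤ) ^ n * B D (p ^ (2 * n) * d) ≡
          (-1 : ℤ) ^ (n + 1) * B D (p ^ (2 * (n + 1)) * d) [ZMOD (p : ℤ) ^ n]) ∧
        ‖(((-1 : ℤ) ^ (n + 1) * B D (p ^ (2 * (n + 1)) * d) : ℤ) : ℚ_[p])
            - (((-1 : ℤ) ^ n * B D (p ^ (2 * n) * d) : ℤ) : ℚ_[p])‖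
          ≤ (p : ℝ) ^ (-(n : ℤ)) :=
  jenkins_alternating_cauchy_general p B D d hd2 hJ
end
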